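/- Let (D_cf, C_cf) be any cut-free cycle-normal CLKID^ω_a proof of the sequent Add2(x,y,z) ⊢ Add1(x,y,z). Then every sequent occurring in an index path of the tree-unfolding of (D_cf, C_cf) is an index sequent. -/

import Mathlib

namespace CLKID

/-- Terms of the language: variables, the constant `0`, and the unary function `s`. -/
inductive Tm : Type where
  | var : ℕ → Tm
  | zero : Tm
  | s : Tm → Tm
deriving DecidableEq

/-- `sIter n t` is the term `s^n t`. -/
def sIter : ℕ → Tm → Tm
  | 0, t => t
  | n + 1, t => Tm.s (sIter n t)

/-- Substitution on terms. -/
def Tm.subst (θ : ℕ → Tm) : Tm → Tm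
  | .var x => θ x
  | .zero => .zero
  | .s t => .s (t.subst θ)

/-- Free variables of a term. -/
def Tm.fv : Tm → Set ℕ
  | .var x => {x}
  | .zero => ∅
  | .s t => t.fv

/-- Subterms of a term. -/
def Tm.sub : Tm → Set Tm
  | .var x => {Tm.var x}
  | .zero => {Tm.zero}
  | .s t => insert (Tm.s t) t.sub

/-- The variable of a term (`none` if the term is of the form `s^n 0`). -/
def Tm.varOf : Tm → Option ℕ
  | .var x => some x
  | .zero => none
  | .s t => t.varOf

/-- Formulas: equations, the two inductive-predicate atoms `Add1`/`Add2`,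
    and the usual first-order connectives and quantifiers. -/
inductive Fm : Type where
  | eq : Tm → Tm → Fm
  | add1 : Tm → Tm → Tm → Fm
  | add2 : Tm → Tm → Tm → Fm
  | not : Fm → Fm
  | and : Fm → Fm → Fm
  | or : Fm → Fm → Fm
  | imp : Fm → Fm → Fm
  | all : ℕ → Fm → Fm
  | ex : ℕ → Fm → Fm
deriving DecidableEq

/-- Substitution on formulas. -/
def Fm.subst (θ : ℕ → Tm) : Fm → Fm
  | .eq t u => .eq (t.subst θ) (u.subst θ)
  | .add1 a b c => .add1 (a.subst θ) (b.subst θ) (c.subst θ)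
  | .add2 a b c => .add2 (a.subst θ) (b.subst θ) (c.subst θ)
  | .not φ => .not (φ.subst θ)
  | .and φ ψ => .and (φ.subst θ) (ψ.subst θ)
  | .or φ ψ => .or (φ.subst θ) (ψ.subst θ)
  | .imp φ ψ => .imp (φ.subst θ) (ψ.subst θ)
  | .all x φ => .all x (φ.subst (Function.update θ x (Tm.var x)))
  | .ex x φ => .ex x (φ.subst (Function.update θ x (Tm.var x)))

/-- Free variables of a formula. -/
def Fm.fv : Fm → Set ℕ
  | .eq t u => t.fv ∪ u.fv
  | .add1 a b c => a.fv ∪ b.fv ∪ c.fv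
  | .add2 a b c => a.fv ∪ b.fv ∪ c.fv
  | .not φ => φ.fv
  | .and φ ψ => φ.fv ∪ ψ.fv
  | .or φ ψ => φ.fv ∪ ψ.fv
  | .imp φ ψ => φ.fv ∪ ψ.fv
  | .all x φ => φ.fv \ {x}
  | .ex x φ => φ.fv \ {x}

/-- Terms occurring in a formula. -/
def Fm.tms : Fm → Set Tm
  | .eq t u => t.sub ∪ u.sub
  | .add1 a b c => a.sub ∪ b.sub ∪ c.sub
  | .add2 a b c => a.sub ∪ b.sub ∪ c.sub
  | .not φ => φ.tms
  | .and φ ψ => φ.tms ∪ ψ.tms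
  | .or φ ψ => φ.tms ∪ ψ.tms
  | .imp φ ψ => φ.tms ∪ ψ.tms
  | .all _ φ => φ.tms
  | .ex _ φ => φ.tms

/-- The substitution `[x := t]`. -/
def sub1 (x : ℕ) (t : Tm) : ℕ → Tm := fun y => if y = x then t else Tm.var y

/-- The simultaneous substitution `[v1 := t, v2 := u]`. -/
def sub2 (v1 v2 : ℕ) (t u : Tm) : ℕ → Tm :=
  fun z => if z = v1 then t else if z = v2 then u else Tm.var z

/-- `≡_Γ`: the smallest congruence relation on terms containing all pairs `(t, u)`
    with the equation `t = u` in `Γ`. -/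
inductive EqvTm (Γ : Set Fm) : Tm → Tm → Prop where
  | base {t u : Tm} : Fm.eq t u ∈ Γ → EqvTm Γ t u
  | refl (t : Tm) : EqvTm Γ t t
  | symm {t u : Tm} : EqvTm Γ t u → EqvTm Γ u t
  | trans {t u v : Tm} : EqvTm Γ t u → EqvTm Γ u v → EqvTm Γ t v
  | sCongr {t u : Tm} : EqvTm Γ t u → EqvTm Γ (Tm.s t) (Tm.s u)

/-- `t ~_Γ u` : `s^n t ≡_Γ s^m u` for some naturals `n`, `m`. -/
def DepTm (Γ : Set Fm) (t u : Tm) : Prop := ∃ n m : ℕ, EqvTm Γ (sIter n t) (sIter m u)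

/-- A sequent: a pair of finite sets of formulas. -/
structure Seq where
  ant : Finset Fm
  suc : Finset Fm

/-- The antecedent of a sequent, as a set of formulas. -/
def antSet (S : Seq) : Set Fm := ↑S.ant

/-- `[Γ]` from Lemma on chains: `{ s^n t1 = s^n t2 | t1 = t2 ∈ Γ or t2 = t1 ∈ Γ }`. -/
def brkt (Γ : Set Fm) : Set Fm :=
  {φ | ∃ (n : ℕ) (t1 t2 : Tm), φ = Fm.eq (sIter n t1) (sIter n t2) ∧
        (Fm.eq t1 t2 ∈ Γ ∨ Fm.eq t2 t1 ∈ Γ)}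

/-- `B1(Γ ⊢ Δ)` : second arguments of `Add1` atoms in the consequent. -/
def B1 (S : Seq) : Set Tm := {b | ∃ a c, Fm.add1 a b c ∈ S.suc}

/-- `C(Γ ⊢ Δ)` : third arguments of `Add2` atoms in the antecedent
    or `Add1` atoms in the consequent. -/
def Cset (S : Seq) : Set Tm :=
  {c | (∃ a b, Fm.add2 a b c ∈ S.ant) ∨ (∃ a b, Fm.add1 a b c ∈ S.suc)}

/-- Index sequent. -/
def IndexSequent (S : Seq) : Prop :=
  (∀ t ∈ B1 S, ∀ u ∈ Cset S, ¬ DepTm (antSet S) t u) ∧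
  (∀ b ∈ B1 S, ∀ b' ∈ B1 S, ∀ n m : ℕ, EqvTm (antSet S) (sIter n b) (sIter m b') → n = m)

/-! ## The cyclic proof systems `CLKID^ω` and `CLKID^ω_a` -/

/-- Rule labels; each label carries the instance data needed to describe the
    rule application (principal formulas, substitutions, case variables, ...).
    `bud` labels bud leaves of cyclic derivation trees. -/
inductive Rule : Type where
  | ax
  | weak
  | cut (φ : Fm)
  | subst (θ : ℕ → Tm)
  | negL (φ : Fm)
  | negR (φ : Fm)
  | andL (φ ψ : Fm)
  | andR (φ ψ : Fm)
  | orL (φ ψ : Fm)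
  | orR (φ ψ : Fm)
  | impL (φ ψ : Fm)
  | impR (φ ψ : Fm)
  | allL (x : ℕ) (t : Tm) (φ : Fm)
  | allR (x : ℕ) (φ : Fm)
  | exL (x : ℕ) (φ : Fm)
  | exR (x : ℕ) (t : Tm) (φ : Fm)
  | eqR (t : Tm)
  | eqL (v1 v2 : ℕ) (t u : Tm)
  | eqLa (v1 v2 : ℕ) (t u : Tm)
  | add1R1
  | add1R2 (a b c : Tm)
  | add2R1
  | add2R2 (a b c : Tm)
  | caseAdd1 (a b c : Tm) (x y z : ℕ)
  | caseAdd2 (a b c : Tm) (x y z : ℕ)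
  | bud

/-- `Inf r S L` : the sequent `S` follows from the list of premises `L`
    by the rule (instance) `r`. -/
inductive Inf : Rule → Seq → List Seq → Prop where
  | ax {Γ Δ : Finset Fm} :
      (Γ ∩ Δ).Nonempty → Inf .ax ⟨Γ, Δ⟩ []
  | weak {Γ Δ Γ' Δ' : Finset Fm} :
      Γ' ⊆ Γ → Δ' ⊆ Δ → Inf .weak ⟨Γ, Δ⟩ [⟨Γ', Δ'⟩]
  | cut {Γ Δ : Finset Fm} {φ : Fm} :
      Inf (.cut φ) ⟨Γ, Δ⟩ [⟨Γ, insert φ Δ⟩, ⟨insert φ Γ, Δ⟩]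
  | subst {Γ Δ : Finset Fm} {θ : ℕ → Tm} :
      Inf (.subst θ) ⟨Γ.image (Fm.subst θ), Δ.image (Fm.subst θ)⟩ [⟨Γ, Δ⟩]
  | negL {Γ Δ : Finset Fm} {φ : Fm} :
      Inf (.negL φ) ⟨insert (.not φ) Γ, Δ⟩ [⟨Γ, insert φ Δ⟩]
  | negR {Γ Δ : Finset Fm} {φ : Fm} :
      Inf (.negR φ) ⟨Γ, insert (.not φ) Δ⟩ [⟨insert φ Γ, Δ⟩]
  | andL {Γ Δ : Finset Fm} {φ ψ : Fm} :
      Inf (.andL φ ψ) ⟨insert (.and φ ψ) Γ, Δ⟩ [⟨insert φ (insert ψ Γ), Δ⟩]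
  | andR {Γ Δ : Finset Fm} {φ ψ : Fm} :
      Inf (.andR φ ψ) ⟨Γ, insert (.and φ ψ) Δ⟩ [⟨Γ, insert φ Δ⟩, ⟨Γ, insert ψ Δ⟩]
  | orL {Γ Δ : Finset Fm} {φ ψ : Fm} :
      Inf (.orL φ ψ) ⟨insert (.or φ ψ) Γ, Δ⟩ [⟨insert φ Γ, Δ⟩, ⟨insert ψ Γ, Δ⟩]
  | orR {Γ Δ : Finset Fm} {φ ψ : Fm} :
      Inf (.orR φ ψ) ⟨Γ, insert (.or φ ψ) Δ⟩ [⟨Γ, insert φ (insert ψ Δ)⟩]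
  | impL {Γ Δ : Finset Fm} {φ ψ : Fm} :
      Inf (.impL φ ψ) ⟨insert (.imp φ ψ) Γ, Δ⟩ [⟨Γ, insert φ Δ⟩, ⟨insert ψ Γ, Δ⟩]
  | impR {Γ Δ : Finset Fm} {φ ψ : Fm} :
      Inf (.impR φ ψ) ⟨Γ, insert (.imp φ ψ) Δ⟩ [⟨insert φ Γ, insert ψ Δ⟩]
  | allL {Γ Δ : Finset Fm} {x : ℕ} {t : Tm} {φ : Fm} :
      Inf (.allL x t φ) ⟨insert (.all x φ) Γ, Δ⟩ [⟨insert (φ.subst (sub1 x t)) Γ, Δ⟩]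
  | allR {Γ Δ : Finset Fm} {x : ℕ} {φ : Fm} :
      (∀ ψ ∈ Γ ∪ Δ, x ∉ Fm.fv ψ) →
      Inf (.allR x φ) ⟨Γ, insert (.all x φ) Δ⟩ [⟨Γ, insert φ Δ⟩]
  | exL {Γ Δ : Finset Fm} {x : ℕ} {φ : Fm} :
      (∀ ψ ∈ Γ ∪ Δ, x ∉ Fm.fv ψ) →
      Inf (.exL x φ) ⟨insert (.ex x φ) Γ, Δ⟩ [⟨insert φ Γ, Δ⟩]
  | exR {Γ Δ : Finset Fm} {x : ℕ} {t : Tm} {φ : Fm} :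
      Inf (.exR x t φ) ⟨Γ, insert (.ex x φ) Δ⟩ [⟨Γ, insert (φ.subst (sub1 x t)) Δ⟩]
  | eqR {Γ Δ : Finset Fm} {t : Tm} :
      Inf (.eqR t) ⟨Γ, insert (.eq t t) Δ⟩ []
  | eqL {Γ Δ : Finset Fm} {v1 v2 : ℕ} {t u : Tm} :
      Inf (.eqL v1 v2 t u)
        ⟨insert (.eq t u) (Γ.image (Fm.subst (sub2 v1 v2 t u))),
          Δ.image (Fm.subst (sub2 v1 v2 t u))⟩
        [⟨Γ.image (Fm.subst (sub2 v1 v2 u t)), Δ.image (Fm.subst (sub2 v1 v2 u t))⟩]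
  | eqLa {Γ Δ : Finset Fm} {v1 v2 : ℕ} {t u : Tm} :
      Inf (.eqLa v1 v2 t u)
        ⟨insert (.eq t u) (Γ.image (Fm.subst (sub2 v1 v2 t u))),
          Δ.image (Fm.subst (sub2 v1 v2 t u))⟩
        [⟨insert (.eq t u) (Γ.image (Fm.subst (sub2 v1 v2 u t))),
          Δ.image (Fm.subst (sub2 v1 v2 u t))⟩]
  | add1R1 {Γ Δ : Finset Fm} {b : Tm} :
      Inf .add1R1 ⟨Γ, insert (.add1 .zero b b) Δ⟩ []
  | add1R2 {Γ Δ : Finset Fm} {a b c : Tm} :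
      Inf (.add1R2 a b c) ⟨Γ, insert (.add1 (.s a) b (.s c)) Δ⟩ [⟨Γ, insert (.add1 a b c) Δ⟩]
  | add2R1 {Γ Δ : Finset Fm} {b : Tm} :
      Inf .add2R1 ⟨Γ, insert (.add2 .zero b b) Δ⟩ []
  | add2R2 {Γ Δ : Finset Fm} {a b c : Tm} :
      Inf (.add2R2 a b c) ⟨Γ, insert (.add2 (.s a) b c) Δ⟩ [⟨Γ, insert (.add2 a (.s b) c) Δ⟩]
  | caseAdd1 {Γ Δ : Finset Fm} {a b c : Tm} {x y z : ℕ} :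
      x ≠ y → x ≠ z → y ≠ z →
      (∀ ψ ∈ insert (Fm.add1 a b c) (Γ ∪ Δ), x ∉ Fm.fv ψ ∧ y ∉ Fm.fv ψ ∧ z ∉ Fm.fv ψ) →
      Inf (.caseAdd1 a b c x y z) ⟨insert (.add1 a b c) Γ, Δ⟩
        [⟨insert (.eq a .zero) (insert (.eq b (.var y)) (insert (.eq c (.var y)) Γ)), Δ⟩,
         ⟨insert (.eq a (.s (.var x))) (insert (.eq b (.var y)) (insert (.eq c (.s (.var z)))
            (insert (.add1 (.var x) (.var y) (.var z)) Γ))), Δ⟩]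
  | caseAdd2 {Γ Δ : Finset Fm} {a b c : Tm} {x y z : ℕ} :
      x ≠ y → x ≠ z → y ≠ z →
      (∀ ψ ∈ insert (Fm.add2 a b c) (Γ ∪ Δ), x ∉ Fm.fv ψ ∧ y ∉ Fm.fv ψ ∧ z ∉ Fm.fv ψ) →
      Inf (.caseAdd2 a b c x y z) ⟨insert (.add2 a b c) Γ, Δ⟩
        [⟨insert (.eq a .zero) (insert (.eq b (.var y)) (insert (.eq c (.var y)) Γ)), Δ⟩,
         ⟨insert (.eq a (.s (.var x))) (insert (.eq b (.var y)) (insert (.eq c (.var z))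
            (insert (.add2 (.var x) (.s (.var y)) (.var z)) Γ))), Δ⟩]

/-- A labeling of tree nodes (finite sequences of naturals) by sequents and rules;
    `none` means the node is not in the tree. -/
abbrev Lbl : Type := List ℕ → Option (Seq × Rule)

/-- The children of `σ` are labeled exactly by the premise list `prems`. -/
def childrenOK (f : Lbl) (σ : List ℕ) (prems : List Seq) : Prop :=
  (∀ i : Fin prems.length, ∃ r', f (σ ++ [(i : ℕ)]) = some (prems.get i, r')) ∧
  (∀ i : ℕ, prems.length ≤ i → f (σ ++ [i]) = none)

/-- Derivation trees (possibly infinite): prefix-closed domain, each non-bud node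
    is the conclusion of a rule whose premises label its children, buds are leaves. -/
structure DTree where
  label : Lbl
  root_def : label [] ≠ none
  prefix_closed : ∀ σ τ : List ℕ, label (σ ++ τ) ≠ none → label σ ≠ none
  wf : ∀ σ S r, label σ = some (S, r) →
    (r = Rule.bud ∧ ∀ i : ℕ, label (σ ++ [i]) = none) ∨
    (r ≠ Rule.bud ∧ ∃ prems, Inf r S prems ∧ childrenOK label σ prems)

/-- `σ` is a bud of the labeling `f`. -/
def budAt (f : Lbl) (σ : List ℕ) : Prop := ∃ S, f σ = some (S, Rule.bud)

/-- `σ` is an inner node of `f` labeled with the sequent `S`. -/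
def innerWith (f : Lbl) (σ : List ℕ) (S : Seq) : Prop :=
  ∃ r, f σ = some (S, r) ∧ r ≠ Rule.bud

/-- A pre-proof: a finite derivation tree together with a function assigning to
    each bud a companion, i.e. an inner node labeled with the same sequent. -/
structure PreProof where
  D : DTree
  fin : {σ : List ℕ | D.label σ ≠ none}.Finite
  C : List ℕ → List ℕ
  comp : ∀ σ S, D.label σ = some (S, Rule.bud) → innerWith D.label (C σ) S

/-- Cycle-normality: every companion is an ancestor of its bud. -/
def PreProof.CycleNormal (P : PreProof) : Prop :=
  ∀ σ S, P.D.label σ = some (S, Rule.bud) → P.C σ <+: σ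

/-- `T` is the tree-unfolding of the pre-proof `P`: it agrees with `P.D` on
    non-bud nodes, below a bud it continues as below the bud's companion, and it
    is empty on nodes not in `P.D` having no bud prefix. -/
def IsUnfolding (P : PreProof) (T : Lbl) : Prop :=
  (∀ σ, P.D.label σ ≠ none → ¬ budAt P.D.label σ → T σ = P.D.label σ) ∧
  (∀ σ₁ σ₂ : List ℕ, budAt P.D.label σ₁ → T (σ₁ ++ σ₂) = T (P.C σ₁ ++ σ₂)) ∧
  (∀ σ, P.D.label σ = none → (∀ σ₁, σ₁ <+: σ → ¬ budAt P.D.label σ₁) → T σ = none)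

/-- An infinite path in the labeling `f`. -/
def IsInfPath (f : Lbl) (p : ℕ → List ℕ) : Prop :=
  (∀ i, f (p i) ≠ none) ∧ (∀ i, ∃ n : ℕ, p (i + 1) = p i ++ [n])

/-- Atomic formulas with an inductive predicate. -/
def isIndAtom (φ : Fm) : Prop :=
  (∃ a b c, φ = Fm.add1 a b c) ∨ (∃ a b c, φ = Fm.add2 a b c)

/-- A progressing trace step: the traced formula is the principal formula of a
    case rule and its successor (in the corresponding case distinction, child `j`)
    is a case-descendant. -/
def progStep : Rule → ℕ → Fm → Fm → Prop := fun r j τ τ' =>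
  match r with
  | .caseAdd1 a b c x y z =>
      τ = Fm.add1 a b c ∧ j = 1 ∧ τ' = Fm.add1 (.var x) (.var y) (.var z)
  | .caseAdd2 a b c x y z =>
      τ = Fm.add2 a b c ∧ j = 1 ∧ τ' = Fm.add2 (.var x) (.s (.var y)) (.var z)
  | _ => False

/-- The trace connection relation between the traced formula at a conclusion of a
    rule `r` and the traced formula at its `j`-th premise. -/
def connStep : Rule → ℕ → Fm → Fm → Prop := fun r j τ τ' =>
  match r with
  | .subst θ => τ = Fm.subst θ τ'
  | .eqL v1 v2 t u =>
      ∃ F : Fm, τ = Fm.subst (sub2 v1 v2 t u) F ∧ τ' = Fm.subst (sub2 v1 v2 u t) F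
  | .eqLa v1 v2 t u =>
      ∃ F : Fm, τ = Fm.subst (sub2 v1 v2 t u) F ∧ τ' = Fm.subst (sub2 v1 v2 u t) F
  | .caseAdd1 a b c x y z => τ' = τ ∨ progStep (.caseAdd1 a b c x y z) j τ τ'
  | .caseAdd2 a b c x y z => τ' = τ ∨ progStep (.caseAdd2 a b c x y z) j τ τ'
  | _ => τ' = τ

/-- `τ` is a trace following the tail from `k` of the path `p` in `f`. -/
def IsTraceFrom (f : Lbl) (p : ℕ → List ℕ) (k : ℕ) (τ : ℕ → Fm) : Prop :=
  ∀ i, k ≤ i →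
    ∃ (S : Seq) (r : Rule) (j : ℕ), f (p i) = some (S, r) ∧ τ i ∈ S.ant ∧ isIndAtom (τ i) ∧
      p (i + 1) = p i ++ [j] ∧ connStep r j (τ i) (τ (i + 1))

/-- The trace `τ` progresses at position `i` of the path `p`. -/
def progAt (f : Lbl) (p : ℕ → List ℕ) (τ : ℕ → Fm) (i : ℕ) : Prop :=
  ∃ (S : Seq) (r : Rule) (j : ℕ), f (p i) = some (S, r) ∧ p (i + 1) = p i ++ [j] ∧
    progStep r j (τ i) (τ (i + 1))

/-- The global trace condition for a (possibly infinite) labeling `f`. -/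
def GTC (f : Lbl) : Prop :=
  ∀ p : ℕ → List ℕ, IsInfPath f p →
    ∃ (k : ℕ) (τ : ℕ → Fm), IsTraceFrom f p k τ ∧
      ∀ n : ℕ, ∃ i, n ≤ i ∧ k ≤ i ∧ progAt f p τ i

/-- A pre-proof is a proof when its tree-unfolding satisfies the
    global trace condition. -/
def PreProof.IsProof (P : PreProof) : Prop := ∃ T : Lbl, IsUnfolding P T ∧ GTC T

/-- Some rule satisfying `Q` occurs in the labeling `f`. -/
def usesRule (f : Lbl) (Q : Rule → Prop) : Prop := ∃ σ S r, f σ = some (S, r) ∧ Q r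

/-- No occurrence of (Cut). -/
def PreProof.CutFree (P : PreProof) : Prop :=
  ¬ usesRule P.D.label (fun r => ∃ φ, r = Rule.cut φ)

/-- No occurrence of (= L_a): the pre-proof is a `CLKID^ω` pre-proof. -/
def PreProof.NoEqLa (P : PreProof) : Prop :=
  ¬ usesRule P.D.label (fun r => ∃ v1 v2 t u, r = Rule.eqLa v1 v2 t u)

/-- No occurrence of (= L): the pre-proof is a `CLKID^ω_a` pre-proof. -/
def PreProof.NoEqL (P : PreProof) : Prop :=
  ¬ usesRule P.D.label (fun r => ∃ v1 v2 t u, r = Rule.eqL v1 v2 t u)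

/-- The conclusion of the pre-proof is the sequent `S`. -/
def PreProof.Concl (P : PreProof) (S : Seq) : Prop := ∃ r, P.D.label [] = some (S, r)

/-- Provability in `CLKID^ω`. -/
def ProvableW (S : Seq) : Prop :=
  ∃ P : PreProof, P.IsProof ∧ P.NoEqLa ∧ P.Concl S

/-- Provability in `CLKID^ω_a`. -/
def ProvableWa (S : Seq) : Prop :=
  ∃ P : PreProof, P.IsProof ∧ P.NoEqL ∧ P.Concl S

/-- Cut-free provability in `CLKID^ω`. -/
def CutFreeProvableW (S : Seq) : Prop :=
  ∃ P : PreProof, P.IsProof ∧ P.CutFree ∧ P.NoEqLa ∧ P.Concl S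

/-- The sequent `Add2(x, y, z) ⊢ Add1(x, y, z)`. -/
def goalSeq : Seq :=
  ⟨{Fm.add2 (Tm.var 0) (Tm.var 1) (Tm.var 2)}, {Fm.add1 (Tm.var 0) (Tm.var 1) (Tm.var 2)}⟩

/-- A cut-free cycle-normal `CLKID^ω_a` proof of `Add2(x,y,z) ⊢ Add1(x,y,z)`. -/
def IsCNProofOfGoal (P : PreProof) : Prop :=
  P.IsProof ∧ P.CutFree ∧ P.NoEqL ∧ P.CycleNormal ∧ P.Concl goalSeq

/-- The index of an `Add2` atom with second argument `b` in the sequent `S` is `⊥`. -/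
def IndexBot (S : Seq) (b : Tm) : Prop :=
  ∀ a' b' c', Fm.add1 a' b' c' ∈ S.suc → ¬ DepTm (antSet S) b b'

/-- `σ` is a switching point of `f`: the conclusion of a `(Case Add2)` rule whose
    principal formula has index `⊥`. -/
def SwitchingPoint (f : Lbl) (σ : List ℕ) : Prop :=
  ∃ S a b c x y z, f σ = some (S, Rule.caseAdd2 a b c x y z) ∧ IndexBot S b

/-- `σ` is the conclusion of a `(Case Add2)` rule in `f`. -/
def CaseAdd2At (f : Lbl) (σ : List ℕ) : Prop :=
  ∃ S a b c x y z, f σ = some (S, Rule.caseAdd2 a b c x y z)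

/-- The node `σ` of `f` is labeled with an index sequent. -/
def IndexSequentAt (f : Lbl) (σ : List ℕ) : Prop :=
  ∃ S r, f σ = some (S, r) ∧ IndexSequent S

/-- A finite index path `p 0, …, p N` in `f`:  its first sequent is an index
    sequent, and a step to the left premise (child `0`) of a `(Case Add2)` rule
    only happens at switching points. -/
def IsIndexPathUpTo (f : Lbl) (p : ℕ → List ℕ) (N : ℕ) : Prop :=
  (∀ i, i ≤ N → f (p i) ≠ none) ∧
  (∀ i, i < N → ∃ n : ℕ, p (i + 1) = p i ++ [n]) ∧
  IndexSequentAt f (p 0) ∧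
  (∀ i, i < N → CaseAdd2At f (p i) → p (i + 1) = p i ++ [0] → SwitchingPoint f (p i))

/-- An infinite index path in `f`. -/
def IsInfIndexPath (f : Lbl) (p : ℕ → List ℕ) : Prop :=
  IsInfPath f p ∧
  IndexSequentAt f (p 0) ∧
  (∀ i, CaseAdd2At f (p i) → p (i + 1) = p i ++ [0] → SwitchingPoint f (p i))

/-- The child index chosen by the rightmost path: the right assumption of
    `(Case Add2)`, the unique premise otherwise. -/
def rightIdx : Rule → ℕ := fun r =>
  match r with
  | .caseAdd2 _ _ _ _ _ _ => 1
  | _ => 0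

/-- One step of the rightmost path in `f`. -/
def RightStep (f : Lbl) (σ σ' : List ℕ) : Prop :=
  ∃ S r, f σ = some (S, r) ∧ σ' = σ ++ [rightIdx r] ∧ f σ' ≠ none

/-- `A(Γ ⊢ Δ)` of Lemma `abc_relations`. -/
def Aset (S : Seq) : Set Tm :=
  {a | (∃ b c, Fm.add2 a b c ∈ S.ant) ∨ (∃ b c, Fm.add1 a b c ∈ S.suc) ∨ a = Tm.zero}

/-- `BC(Γ ⊢ Δ)` of Lemma `abc_relations`. -/
def BCset (S : Seq) : Set Tm :=
  {t | (∃ a c, Fm.add2 a t c ∈ S.ant) ∨ (∃ a b, Fm.add2 a b t ∈ S.ant) ∨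
       (∃ a c, Fm.add1 a t c ∈ S.suc) ∨ (∃ a b, Fm.add1 a b t ∈ S.suc)}

/-- The rules that can occur in a cut-free cycle-normal `CLKID^ω_a` proof of
    `Add2(x,y,z) ⊢ Add1(x,y,z)` (plus bud labels). -/
def allowedRule (r : Rule) : Prop :=
  r = Rule.bud ∨ r = Rule.weak ∨ (∃ θ, r = Rule.subst θ) ∨
  (∃ v1 v2 t u, r = Rule.eqLa v1 v2 t u) ∨
  (∃ a b c x y z, r = Rule.caseAdd2 a b c x y z) ∨
  r = Rule.add1R1 ∨ (∃ a b c, r = Rule.add1R2 a b c)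

/-!
Along the finite derivation tree every sequent has only equations and `Add2` atoms on the left
and `Add1` atoms on the right, and no first argument is `~`-related to a second or third
argument (Lemma `abc_relations`); every node of the unfolding is a copy of an inner node of the
tree. Passing from a conclusion to a premise, `≡` of the premise maps into `≡` of the
conclusion, enlarged for `(Case Add2)` by `a = 0`, `c = b` (left premise) or `a = s x` with `x`
fresh (right premise). Adding an equation `t₁ = t₂` merely merges the `~`-classes of `t₁` and
`t₂`, so both index conditions survive as long as `t₁`, `t₂` stay away from the relevant
arguments: `a` and `0` are first arguments, `s x` is fresh, `c` is kept apart from `B1` by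
the index condition itself, and `b` by the switching-point requirement that its index be `⊥`.
-/

@[simp] lemma sIter_zero (t : Tm) : sIter 0 t = t := rfl

@[simp] lemma sIter_succ (n : ℕ) (t : Tm) : sIter (n + 1) t = .s (sIter n t) := rfl

lemma sIter_sIter (n m : ℕ) (t : Tm) : sIter n (sIter m t) = sIter (n + m) t := by
  induction n with
  | zero => simp
  | succ n ih => simp [ih, Nat.succ_add]

@[simp] lemma Tm.fv_sIter (n : ℕ) (t : Tm) : (sIter n t).fv = t.fv := by
  induction n with
  | zero => rfl
  | succ n ih => simpa [Tm.fv] using ih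

@[simp] lemma Tm.subst_sIter (θ : ℕ → Tm) (n : ℕ) (t : Tm) :
    (sIter n t).subst θ = sIter n (t.subst θ) := by
  induction n with
  | zero => rfl
  | succ n ih => simp [Tm.subst, ih]

lemma Tm.subst_eq_self {θ : ℕ → Tm} {t : Tm} (h : ∀ v ∈ t.fv, θ v = .var v) :
    t.subst θ = t := by
  induction t with
  | var v => exact h v rfl
  | zero => rfl
  | s t ih => exact congrArg Tm.s (ih h)

@[simp] lemma Tm.subst_var (t : Tm) : t.subst .var = t := Tm.subst_eq_self fun _ _ => rfl

lemma Fm.subst_eq_self {θ : ℕ → Tm} {φ : Fm} (h : ∀ v ∈ φ.fv, θ v = .var v) :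
    φ.subst θ = φ := by
  induction φ generalizing θ with
  | eq t u =>
    simp only [Fm.fv, Set.mem_union] at h
    exact congrArg₂ Fm.eq (Tm.subst_eq_self fun v hv => h v (.inl hv))
      (Tm.subst_eq_self fun v hv => h v (.inr hv))
  | add1 a b c | add2 a b c =>
    simp only [Fm.fv, Set.mem_union] at h
    simp only [Fm.subst, Tm.subst_eq_self fun v hv => h v (.inl (.inl hv)),
      Tm.subst_eq_self fun v hv => h v (.inl (.inr hv)), Tm.subst_eq_self fun v hv => h v (.inr hv)]
  | not φ ih => exact congrArg Fm.not (ih h)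
  | and φ ψ ihφ ihψ | or φ ψ ihφ ihψ | imp φ ψ ihφ ihψ =>
    simp only [Fm.fv, Set.mem_union] at h
    simp only [Fm.subst, ihφ fun v hv => h v (.inl hv), ihψ fun v hv => h v (.inr hv)]
  | all x φ ih | ex x φ ih =>
    have hx : ∀ v ∈ φ.fv, Function.update θ x (.var x) v = .var v := fun v hv => by
      by_cases hvx : v = x
      · simp [hvx]
      · rw [Function.update_of_ne hvx]
        exact h v ⟨hv, hvx⟩
    simp only [Fm.subst, ih hx]

@[simp] lemma Fm.subst_var (φ : Fm) : φ.subst .var = φ := Fm.subst_eq_self fun _ _ => rfl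

lemma Fm.subst_sub1_of_notMem {y : ℕ} {b : Tm} {φ : Fm} (hy : y ∉ φ.fv) :
    φ.subst (sub1 y b) = φ :=
  Fm.subst_eq_self fun v hv => if_neg fun (h : v = y) => hy (h ▸ hv)

lemma Fm.subst_sub2_of_notMem {y z : ℕ} {b c : Tm} {φ : Fm} (hy : y ∉ φ.fv) (hz : z ∉ φ.fv) :
    φ.subst (sub2 y z b c) = φ :=
  Fm.subst_eq_self fun v hv => by
    simp only [sub2, if_neg fun (h : v = y) => hy (h ▸ hv), if_neg fun (h : v = z) => hz (h ▸ hv)]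

@[simp] lemma antSet_mk (Γ Δ : Finset Fm) : antSet ⟨Γ, Δ⟩ = ↑Γ := rfl

namespace EqvTm

variable {Γ : Set Fm}

lemma sIter_congr (n : ℕ) {t u : Tm} (h : EqvTm Γ t u) : EqvTm Γ (sIter n t) (sIter n u) := by
  induction n with
  | zero => exact h
  | succ n ih => exact ih.sCongr

lemma subst {Γ' : Set Fm} {θ : ℕ → Tm}
    (hΓ : ∀ t u, Fm.eq t u ∈ Γ' → EqvTm Γ (t.subst θ) (u.subst θ)) {t u : Tm}
    (h : EqvTm Γ' t u) : EqvTm Γ (t.subst θ) (u.subst θ) := by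
  induction h with
  | base h => exact hΓ _ _ h
  | refl t => exact .refl _
  | symm _ ih => exact ih.symm
  | trans _ _ ih₁ ih₂ => exact ih₁.trans ih₂
  | sCongr _ ih => exact ih.sCongr

lemma mem_fv_iff {x : ℕ} (hΓ : ∀ t u, Fm.eq t u ∈ Γ → x ∉ t.fv ∧ x ∉ u.fv) {t u : Tm}
    (h : EqvTm Γ t u) : x ∈ t.fv ↔ x ∈ u.fv := by
  induction h with
  | base h => exact iff_of_false (hΓ _ _ h).1 (hΓ _ _ h).2
  | refl t => rfl
  | symm _ ih => exact ih.symm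
  | trans _ _ ih₁ ih₂ => exact ih₁.trans ih₂
  | sCongr _ ih => exact ih

end EqvTm

@[simp, refl] lemma EqvTm.rfl {Γ : Set Fm} {t : Tm} : EqvTm Γ t t := .refl t

namespace DepTm

variable {Γ : Set Fm}

lemma of_eqvTm {t u : Tm} (h : EqvTm Γ t u) : DepTm Γ t u := ⟨0, 0, h⟩

@[simp, refl] lemma refl (t : Tm) : DepTm Γ t t := of_eqvTm (.refl t)

@[symm] lemma symm {t u : Tm} : DepTm Γ t u → DepTm Γ u t
  | ⟨n, m, h⟩ => ⟨m, n, h.symm⟩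

@[trans] lemma trans {t u v : Tm} : DepTm Γ t u → DepTm Γ u v → DepTm Γ t v
  | ⟨n, m, h⟩, ⟨n', m', h'⟩ => by
    refine ⟨n' + n, m + m', ?_⟩
    have h₁ := h.sIter_congr n'
    have h₂ := h'.sIter_congr m
    rw [sIter_sIter, sIter_sIter] at h₁ h₂
    rw [Nat.add_comm n' m] at h₁
    exact h₁.trans h₂

lemma sIter_left_iff (k : ℕ) {t u : Tm} : DepTm Γ (sIter k t) u ↔ DepTm Γ t u :=
  ⟨fun h => .trans ⟨k, 0, .refl _⟩ h, fun h => .trans ⟨0, k, .refl _⟩ h⟩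

lemma s_left_iff {t u : Tm} : DepTm Γ (.s t) u ↔ DepTm Γ t u := sIter_left_iff 1

lemma subst {Γ' : Set Fm} {θ : ℕ → Tm}
    (hΓ : ∀ t u, Fm.eq t u ∈ Γ' → EqvTm Γ (t.subst θ) (u.subst θ)) {t u : Tm} :
    DepTm Γ' t u → DepTm Γ (t.subst θ) (u.subst θ)
  | ⟨n, m, h⟩ => ⟨n, m, by simpa using h.subst hΓ⟩

lemma not_of_fresh {x : ℕ} (hΓ : ∀ t u, Fm.eq t u ∈ Γ → x ∉ t.fv ∧ x ∉ u.fv) {t u : Tm}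
    (ht : x ∈ t.fv) (hu : x ∉ u.fv) : ¬ DepTm Γ t u
  | ⟨n, m, h⟩ => hu (by simpa using (h.mem_fv_iff hΓ).mp (by simpa using ht))

end DepTm

/-- Adding the equation `t₁ = t₂` to `Γ` only merges the `~_Γ`-classes of `t₁` and `t₂`. -/
lemma EqvTm.of_insert {Γ : Set Fm} {t₁ t₂ w w' : Tm}
    (h : EqvTm (insert (Fm.eq t₁ t₂) Γ) w w') :
    EqvTm Γ w w' ∨
      ((DepTm Γ w t₁ ∨ DepTm Γ w t₂) ∧ (DepTm Γ w' t₁ ∨ DepTm Γ w' t₂)) := by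
  induction h with
  | base h =>
    rcases Set.mem_insert_iff.mp h with h | h
    · cases h
      exact .inr ⟨.inl (.refl _), .inr (.refl _)⟩
    · exact .inl (.base h)
  | refl t => exact .inl (.refl t)
  | symm _ ih => exact ih.imp EqvTm.symm And.symm
  | trans _ _ ih₁ ih₂ =>
    rcases ih₁ with h₁ | ⟨h₁, h₁'⟩ <;> rcases ih₂ with h₂ | ⟨h₂, h₂'⟩
    · exact .inl (h₁.trans h₂)
    · exact .inr ⟨h₂.imp (DepTm.of_eqvTm h₁).trans (DepTm.of_eqvTm h₁).trans, h₂'⟩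
    · exact .inr ⟨h₁, h₁'.imp (DepTm.of_eqvTm h₂).symm.trans (DepTm.of_eqvTm h₂).symm.trans⟩
    · exact .inr ⟨h₁, h₂'⟩
  | sCongr _ ih =>
    simp only [DepTm.s_left_iff]
    exact ih.imp EqvTm.sCongr id

def Separated (Γ : Set Fm) (X Y : Set Tm) : Prop := ∀ t ∈ X, ∀ u ∈ Y, ¬ DepTm Γ t u

def Rigid (Γ : Set Fm) (B : Set Tm) : Prop :=
  ∀ b ∈ B, ∀ b' ∈ B, ∀ n m : ℕ, EqvTm Γ (sIter n b) (sIter m b') → n = m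

lemma indexSequent_iff (S : Seq) :
    IndexSequent S ↔ Separated (antSet S) (B1 S) (Cset S) ∧ Rigid (antSet S) (B1 S) :=
  Iff.rfl

namespace Separated

variable {Γ : Set Fm} {X Y : Set Tm}

lemma symm (h : Separated Γ X Y) : Separated Γ Y X :=
  fun u hu t ht hd => h t ht u hu hd.symm

lemma mono {X' Y' : Set Tm} (h : Separated Γ X Y) (hX : X' ⊆ X) (hY : Y' ⊆ Y) :
    Separated Γ X' Y' :=
  fun t ht u hu => h t (hX ht) u (hY hu)

lemma singleton {t : Tm} (h : Separated Γ X Y) (ht : t ∈ X) : Separated Γ {t} Y :=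
  h.mono (Set.singleton_subset_iff.mpr ht) subset_rfl

lemma s_var_of_fresh {x : ℕ} (hΓ : ∀ t u, Fm.eq t u ∈ Γ → x ∉ t.fv ∧ x ∉ u.fv)
    (hY : ∀ u ∈ Y, x ∉ u.fv) :
    Separated Γ {.s (.var x)} Y := by
  rintro t rfl u hu
  exact DepTm.not_of_fresh hΓ rfl (hY u hu)

lemma insert_eq {t₁ t₂ : Tm} (h : Separated Γ X Y) (h₁ : Separated Γ {t₁} Y)
    (h₂ : Separated Γ {t₂} Y) : Separated (insert (Fm.eq t₁ t₂) Γ) X Y := by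
  rintro t ht u hu ⟨n, m, hd⟩
  rcases hd.of_insert with hd | ⟨-, hu' | hu'⟩
  · exact h t ht u hu ⟨n, m, hd⟩
  · exact h₁ t₁ rfl u hu ((DepTm.sIter_left_iff m).mp hu').symm
  · exact h₂ t₂ rfl u hu ((DepTm.sIter_left_iff m).mp hu').symm

lemma pullback {Γ' : Set Fm} {X' Y' : Set Tm} {θ : ℕ → Tm}
    (hΓ : ∀ t u, Fm.eq t u ∈ Γ' → EqvTm Γ (t.subst θ) (u.subst θ))
    (hX : ∀ t ∈ X', ∃ t₁ ∈ X, DepTm Γ (t.subst θ) t₁)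
    (hY : ∀ u ∈ Y', ∃ u₁ ∈ Y, DepTm Γ (u.subst θ) u₁) (h : Separated Γ X Y) :
    Separated Γ' X' Y' := by
  intro t ht u hu hd
  obtain ⟨t₁, ht₁, htt₁⟩ := hX t ht
  obtain ⟨u₁, hu₁, huu₁⟩ := hY u hu
  exact h t₁ ht₁ u₁ hu₁ (htt₁.symm.trans ((DepTm.subst hΓ hd).trans huu₁))

end Separated

lemma indexBot_iff (S : Seq) (b : Tm) : IndexBot S b ↔ Separated (antSet S) {b} (B1 S) :=
  ⟨fun h _ ht b' ⟨a', c', hm⟩ => ht ▸ h a' b' c' hm, fun h a' b' c' hm => h b rfl b' ⟨a', c', hm⟩⟩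

namespace Rigid

variable {Γ : Set Fm} {B : Set Tm}

lemma insert_eq {t₁ t₂ : Tm} (h : Rigid Γ B) (h₁ : Separated Γ B {t₁})
    (h₂ : Separated Γ B {t₂}) : Rigid (insert (Fm.eq t₁ t₂) Γ) B := by
  intro b hb b' hb' n m hd
  rcases hd.of_insert with hd | ⟨hb₁ | hb₂, -⟩
  · exact h b hb b' hb' n m hd
  · exact absurd ((DepTm.sIter_left_iff n).mp hb₁) (h₁ b hb t₁ rfl)
  · exact absurd ((DepTm.sIter_left_iff n).mp hb₂) (h₂ b hb t₂ rfl)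

lemma pullback {Γ' : Set Fm} {B' : Set Tm} {θ : ℕ → Tm}
    (hΓ : ∀ t u, Fm.eq t u ∈ Γ' → EqvTm Γ (t.subst θ) (u.subst θ))
    (hB : ∀ b ∈ B', ∃ b₁ ∈ B, EqvTm Γ (b.subst θ) b₁) (h : Rigid Γ B) : Rigid Γ' B' := by
  intro b hb b' hb' n m hd
  obtain ⟨b₁, hb₁, hbb₁⟩ := hB b hb
  obtain ⟨b₁', hb₁', hbb₁'⟩ := hB b' hb'
  have hd' : EqvTm Γ (sIter n (b.subst θ)) (sIter m (b'.subst θ)) := by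
    simpa using hd.subst hΓ
  exact h b₁ hb₁ b₁' hb₁' n m
    (((hbb₁.sIter_congr n).symm.trans hd').trans (hbb₁'.sIter_congr m))

end Rigid

lemma B1_subset_BCset (S : Seq) : B1 S ⊆ BCset S := fun _ ⟨a, c, h⟩ => .inr (.inr (.inl ⟨a, c, h⟩))

lemma Cset_subset_BCset (S : Seq) : Cset S ⊆ BCset S := by
  rintro _ (⟨a, b, h⟩ | ⟨a, b, h⟩)
  exacts [.inr (.inl ⟨a, b, h⟩), .inr (.inr (.inr ⟨a, b, h⟩))]

lemma notMem_fv_of_mem_BCset {S : Seq} {x : ℕ} (hx : ∀ ψ ∈ S.ant ∪ S.suc, x ∉ ψ.fv) {u : Tm}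
    (hu : u ∈ BCset S) : x ∉ u.fv := by
  rcases hu with ⟨p, q, h⟩ | ⟨p, q, h⟩ | ⟨p, q, h⟩ | ⟨p, q, h⟩
  · exact fun hxu => hx _ (Finset.mem_union_left _ h) (by simp [Fm.fv, hxu])
  · exact fun hxu => hx _ (Finset.mem_union_left _ h) (by simp [Fm.fv, hxu])
  · exact fun hxu => hx _ (Finset.mem_union_right _ h) (by simp [Fm.fv, hxu])
  · exact fun hxu => hx _ (Finset.mem_union_right _ h) (by simp [Fm.fv, hxu])

/- A premise `S'` is simulated by its conclusion `S` with `Γ` the equations of `S`, extended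
for `(Case Add2)` by the equations the case split adds, and `θ` eliminating its fresh
variables `y := b`, `z := c`. Separation and rigidity then pull back from `S` to `S'`. -/
structure Simulation (Γ : Set Fm) (θ : ℕ → Tm) (S' S : Seq) : Prop where
  eq : ∀ t u, Fm.eq t u ∈ antSet S' → EqvTm Γ (t.subst θ) (u.subst θ)
  add2 : ∀ a b c, Fm.add2 a b c ∈ S'.ant → ∃ a₁ b₁ c₁, Fm.add2 a₁ b₁ c₁ ∈ S.ant ∧
    DepTm Γ (a.subst θ) a₁ ∧ DepTm Γ (b.subst θ) b₁ ∧ DepTm Γ (c.subst θ) c₁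
  add1 : ∀ a b c, Fm.add1 a b c ∈ S'.suc → ∃ a₁ b₁ c₁, Fm.add1 a₁ b₁ c₁ ∈ S.suc ∧
    DepTm Γ (a.subst θ) a₁ ∧ EqvTm Γ (b.subst θ) b₁ ∧ DepTm Γ (c.subst θ) c₁

namespace Simulation

variable {Γ : Set Fm} {θ : ℕ → Tm} {S' S : Seq}

lemma aset (h : Simulation Γ θ S' S) : ∀ t ∈ Aset S', ∃ t₁ ∈ Aset S, DepTm Γ (t.subst θ) t₁ := by
  rintro t (⟨b, c, hm⟩ | ⟨b, c, hm⟩ | rfl)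
  · obtain ⟨a₁, b₁, c₁, hm₁, ha, -⟩ := h.add2 t b c hm
    exact ⟨a₁, .inl ⟨b₁, c₁, hm₁⟩, ha⟩
  · obtain ⟨a₁, b₁, c₁, hm₁, ha, -⟩ := h.add1 t b c hm
    exact ⟨a₁, .inr (.inl ⟨b₁, c₁, hm₁⟩), ha⟩
  · exact ⟨.zero, .inr (.inr rfl), .refl _⟩

lemma bcset (h : Simulation Γ θ S' S) :
    ∀ t ∈ BCset S', ∃ t₁ ∈ BCset S, DepTm Γ (t.subst θ) t₁ := by
  rintro t (⟨a, c, hm⟩ | ⟨a, b, hm⟩ | ⟨a, c, hm⟩ | ⟨a, b, hm⟩)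
  · obtain ⟨a₁, b₁, c₁, hm₁, -, hb, -⟩ := h.add2 a t c hm
    exact ⟨b₁, .inl ⟨a₁, c₁, hm₁⟩, hb⟩
  · obtain ⟨a₁, b₁, c₁, hm₁, -, -, hc⟩ := h.add2 a b t hm
    exact ⟨c₁, .inr (.inl ⟨a₁, b₁, hm₁⟩), hc⟩
  · obtain ⟨a₁, b₁, c₁, hm₁, -, hb, -⟩ := h.add1 a t c hm
    exact ⟨b₁, .inr (.inr (.inl ⟨a₁, c₁, hm₁⟩)), .of_eqvTm hb⟩
  · obtain ⟨a₁, b₁, c₁, hm₁, -, -, hc⟩ := h.add1 a b t hm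
    exact ⟨c₁, .inr (.inr (.inr ⟨a₁, b₁, hm₁⟩)), hc⟩

lemma b1 (h : Simulation Γ θ S' S) : ∀ t ∈ B1 S', ∃ t₁ ∈ B1 S, EqvTm Γ (t.subst θ) t₁ := by
  rintro t ⟨a, c, hm⟩
  obtain ⟨a₁, b₁, c₁, hm₁, -, hb, -⟩ := h.add1 a t c hm
  exact ⟨b₁, ⟨a₁, c₁, hm₁⟩, hb⟩

lemma cset (h : Simulation Γ θ S' S) : ∀ t ∈ Cset S', ∃ t₁ ∈ Cset S, DepTm Γ (t.subst θ) t₁ := by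
  rintro t (⟨a, b, hm⟩ | ⟨a, b, hm⟩)
  · obtain ⟨a₁, b₁, c₁, hm₁, -, -, hc⟩ := h.add2 a b t hm
    exact ⟨c₁, .inl ⟨a₁, b₁, hm₁⟩, hc⟩
  · obtain ⟨a₁, b₁, c₁, hm₁, -, -, hc⟩ := h.add1 a b t hm
    exact ⟨c₁, .inr ⟨a₁, b₁, hm₁⟩, hc⟩

lemma separated (h : Simulation Γ θ S' S) (hS : Separated Γ (Aset S) (BCset S)) :
    Separated (antSet S') (Aset S') (BCset S') :=
  hS.pullback h.eq h.aset h.bcset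

lemma indexSequent (h : Simulation Γ θ S' S) (hS : Separated Γ (B1 S) (Cset S))
    (hR : Rigid Γ (B1 S)) : IndexSequent S' :=
  ⟨hS.pullback h.eq (fun t ht => (h.b1 t ht).imp fun _ ⟨h₁, h₂⟩ => ⟨h₁, .of_eqvTm h₂⟩) h.cset,
    hR.pullback h.eq h.b1⟩

end Simulation

section Construction

variable {Γ : Set Fm} {θ : ℕ → Tm} {Γ' Δ' : Finset Fm} {S : Seq}

lemma simulation_of_subset (hΓ' : Γ' ⊆ S.ant) (hΔ' : Δ' ⊆ S.suc) (hS : antSet S ⊆ Γ)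
    (hfix : ∀ ψ ∈ Γ' ∪ Δ', ψ.subst θ = ψ) : Simulation Γ θ ⟨Γ', Δ'⟩ S where
  eq t u h := by
    obtain ⟨ht, hu⟩ := Fm.eq.inj (hfix _ (Finset.mem_union_left _ h))
    rw [ht, hu]
    exact .base (hS (hΓ' h))
  add2 a b c h := by
    obtain ⟨ha, hb, hc⟩ := Fm.add2.inj (hfix _ (Finset.mem_union_left _ h))
    exact ⟨a, b, c, hΓ' h, by rw [ha], by rw [hb], by rw [hc]⟩
  add1 a b c h := by
    obtain ⟨ha, hb, hc⟩ := Fm.add1.inj (hfix _ (Finset.mem_union_right _ h))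
    exact ⟨a, b, c, hΔ' h, by rw [ha], by rw [hb], by rw [hc]⟩

lemma Simulation.insert_eq {t u : Tm} (h : Simulation Γ θ ⟨Γ', Δ'⟩ S)
    (he : EqvTm Γ (t.subst θ) (u.subst θ)) : Simulation Γ θ ⟨insert (.eq t u) Γ', Δ'⟩ S where
  eq p q hm := by
    rcases Finset.mem_insert.mp hm with hm | hm
    · cases hm
      exact he
    · exact h.eq p q hm
  add2 a b c hm := h.add2 a b c ((Finset.mem_insert.mp hm).resolve_left nofun)
  add1 := h.add1

lemma Simulation.insert_add2 {a b c a₁ b₁ c₁ : Tm} (h : Simulation Γ θ ⟨Γ', Δ'⟩ S)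
    (hm : Fm.add2 a₁ b₁ c₁ ∈ S.ant) (ha : DepTm Γ (a.subst θ) a₁)
    (hb : DepTm Γ (b.subst θ) b₁) (hc : DepTm Γ (c.subst θ) c₁) :
    Simulation Γ θ ⟨insert (.add2 a b c) Γ', Δ'⟩ S where
  eq p q hm' := h.eq p q ((Finset.mem_insert.mp hm').resolve_left nofun)
  add2 p q r hm' := by
    rcases Finset.mem_insert.mp hm' with hm' | hm'
    · cases hm'
      exact ⟨a₁, b₁, c₁, hm, ha, hb, hc⟩
    · exact h.add2 p q r hm'
  add1 := h.add1

lemma Simulation.insert_add1 {a b c a₁ b₁ c₁ : Tm} (h : Simulation Γ θ ⟨Γ', Δ'⟩ S)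
    (hm : Fm.add1 a₁ b₁ c₁ ∈ S.suc) (ha : DepTm Γ (a.subst θ) a₁)
    (hb : EqvTm Γ (b.subst θ) b₁) (hc : DepTm Γ (c.subst θ) c₁) :
    Simulation Γ θ ⟨Γ', insert (.add1 a b c) Δ'⟩ S where
  eq := h.eq
  add2 := h.add2
  add1 p q r hm' := by
    rcases Finset.mem_insert.mp hm' with hm' | hm'
    · cases hm'
      exact ⟨a₁, b₁, c₁, hm, ha, hb, hc⟩
    · exact h.add1 p q r hm'

end Construction

section RuleSimulations

variable {Γ Δ : Finset Fm}

lemma simulation_weak {Γ' Δ' : Finset Fm} (hΓ : Γ' ⊆ Γ) (hΔ : Δ' ⊆ Δ) :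
    Simulation (antSet ⟨Γ, Δ⟩) .var ⟨Γ', Δ'⟩ ⟨Γ, Δ⟩ :=
  simulation_of_subset hΓ hΔ subset_rfl fun ψ _ => Fm.subst_var ψ

lemma simulation_subst (θ : ℕ → Tm) :
    Simulation (antSet ⟨Γ.image (Fm.subst θ), Δ.image (Fm.subst θ)⟩) θ ⟨Γ, Δ⟩
      ⟨Γ.image (Fm.subst θ), Δ.image (Fm.subst θ)⟩ where
  eq _ _ h := .base (Finset.mem_coe.mpr (Finset.mem_image_of_mem (Fm.subst θ) h))
  add2 _ _ _ h := ⟨_, _, _, Finset.mem_image_of_mem (Fm.subst θ) h, .refl _, .refl _, .refl _⟩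
  add1 _ _ _ h := ⟨_, _, _, Finset.mem_image_of_mem (Fm.subst θ) h, .refl _, .refl _, .refl _⟩

lemma EqvTm.subst_sub2_swap {Γ₀ : Set Fm} {v₁ v₂ : ℕ} {t u : Tm} (ht : Fm.eq t u ∈ Γ₀)
    (w : Tm) : EqvTm Γ₀ (w.subst (sub2 v₁ v₂ u t)) (w.subst (sub2 v₁ v₂ t u)) := by
  induction w with
  | var v =>
    simp only [Tm.subst, sub2]
    split_ifs
    · exact (EqvTm.base ht).symm
    · exact .base ht
    · exact .refl _
  | zero => exact .refl _
  | s w ih => exact ih.sCongr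

lemma simulation_eqLa {v₁ v₂ : ℕ} {t u : Tm} :
    Simulation
      (antSet ⟨insert (.eq t u) (Γ.image (Fm.subst (sub2 v₁ v₂ t u))),
        Δ.image (Fm.subst (sub2 v₁ v₂ t u))⟩) .var
      ⟨insert (.eq t u) (Γ.image (Fm.subst (sub2 v₁ v₂ u t))),
        Δ.image (Fm.subst (sub2 v₁ v₂ u t))⟩
      ⟨insert (.eq t u) (Γ.image (Fm.subst (sub2 v₁ v₂ t u))),
        Δ.image (Fm.subst (sub2 v₁ v₂ t u))⟩ := by
  have htu : Fm.eq t u ∈ antSet ⟨insert (.eq t u) (Γ.image (Fm.subst (sub2 v₁ v₂ t u))),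
      Δ.image (Fm.subst (sub2 v₁ v₂ t u))⟩ := Finset.mem_insert_self _ _
  have swap := EqvTm.subst_sub2_swap (v₁ := v₁) (v₂ := v₂) htu
  refine ⟨?_, ?_, ?_⟩ <;> simp only [Tm.subst_var]
  · intro p q h
    rcases Finset.mem_insert.mp h with h | h
    · cases h
      exact .base htu
    obtain ⟨φ, hφ, hφeq⟩ := Finset.mem_image.mp h
    cases φ <;> simp only [Fm.subst, reduceCtorEq, Fm.eq.injEq] at hφeq
    obtain ⟨rfl, rfl⟩ := hφeq
    exact (swap _).trans ((EqvTm.base (Finset.mem_insert_of_mem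
      (Finset.mem_image_of_mem (Fm.subst (sub2 v₁ v₂ t u)) hφ))).trans (swap _).symm)
  · intro a b c h
    obtain ⟨φ, hφ, hφeq⟩ := Finset.mem_image.mp ((Finset.mem_insert.mp h).resolve_left nofun)
    cases φ <;> simp only [Fm.subst, reduceCtorEq, Fm.add2.injEq] at hφeq
    obtain ⟨rfl, rfl, rfl⟩ := hφeq
    exact ⟨_, _, _, Finset.mem_insert_of_mem (Finset.mem_image_of_mem _ hφ),
      .of_eqvTm (swap _), .of_eqvTm (swap _), .of_eqvTm (swap _)⟩
  · intro a b c h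
    obtain ⟨φ, hφ, hφeq⟩ := Finset.mem_image.mp h
    cases φ <;> simp only [Fm.subst, reduceCtorEq, Fm.add1.injEq] at hφeq
    obtain ⟨rfl, rfl, rfl⟩ := hφeq
    exact ⟨_, _, _, Finset.mem_image_of_mem _ hφ, .of_eqvTm (swap _), swap _,
      .of_eqvTm (swap _)⟩

lemma simulation_add1R2 {a b c : Tm} :
    Simulation (antSet ⟨Γ, insert (.add1 (.s a) b (.s c)) Δ⟩) .var
      ⟨Γ, insert (.add1 a b c) Δ⟩ ⟨Γ, insert (.add1 (.s a) b (.s c)) Δ⟩ :=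
  (simulation_of_subset subset_rfl (Finset.subset_insert _ _) subset_rfl
    fun ψ _ => Fm.subst_var ψ).insert_add1 (Finset.mem_insert_self _ _)
      (by simpa using ⟨1, 0, .refl _⟩) (by simp) (by simpa using ⟨1, 0, .refl _⟩)

end RuleSimulations

def Fm.IsEqOrAdd2 : Fm → Prop
  | .eq _ _ => True
  | .add2 _ _ _ => True
  | _ => False

def Fm.IsAdd1 : Fm → Prop
  | .add1 _ _ _ => True
  | _ => False

/- The invariant of Lemma `abc_relations`; it holds at every node of the proof. -/
structure GoodSeq (S : Seq) : Prop where
  ant : ∀ φ ∈ S.ant, φ.IsEqOrAdd2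
  suc : ∀ φ ∈ S.suc, φ.IsAdd1
  sep : Separated (antSet S) (Aset S) (BCset S)

def Rule.NotCutNorEqL : Rule → Prop
  | .cut _ => False
  | .eqL _ _ _ _ => False
  | _ => True

@[simp] lemma Fm.isEqOrAdd2_subst (θ : ℕ → Tm) (φ : Fm) :
    (φ.subst θ).IsEqOrAdd2 ↔ φ.IsEqOrAdd2 := by
  cases φ <;> rfl

@[simp] lemma Fm.isAdd1_subst (θ : ℕ → Tm) (φ : Fm) : (φ.subst θ).IsAdd1 ↔ φ.IsAdd1 := by
  cases φ <;> rfl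

section CaseAdd2

variable {Γ Δ : Finset Fm} {a b c : Tm} {x y z : ℕ}

local notation "S₀" => Seq.mk (insert (Fm.add2 a b c) Γ) Δ

lemma simulation_caseAdd2_left (hy : ∀ ψ ∈ insert (Fm.add2 a b c) (Γ ∪ Δ), y ∉ ψ.fv) :
    Simulation (insert (.eq a .zero) (insert (.eq c b) (antSet S₀))) (sub1 y b)
      ⟨insert (.eq a .zero) (insert (.eq b (.var y)) (insert (.eq c (.var y)) Γ)), Δ⟩ S₀ := by
  obtain ⟨ha, hb, hc⟩ := Fm.add2.inj (Fm.subst_sub1_of_notMem (b := b)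
    (hy _ (Finset.mem_insert_self _ _)))
  have hyb : (Tm.var y).subst (sub1 y b) = b := by simp [Tm.subst, sub1]
  refine (((simulation_of_subset (Finset.subset_insert _ _) subset_rfl
    ((Set.subset_insert _ _).trans (Set.subset_insert _ _))
    fun ψ hψ => Fm.subst_sub1_of_notMem (hy ψ (Finset.mem_insert_of_mem hψ))).insert_eq
    ?_).insert_eq ?_).insert_eq ?_
  · rw [hc, hyb]
    exact .base (Set.mem_insert_of_mem _ (Set.mem_insert _ _))
  · rw [hb, hyb]
  · rw [ha]
    exact .base (Set.mem_insert _ _)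

lemma simulation_caseAdd2_right (hxy : x ≠ y) (hxz : x ≠ z) (hyz : y ≠ z)
    (hyz' : ∀ ψ ∈ insert (Fm.add2 a b c) (Γ ∪ Δ), y ∉ ψ.fv ∧ z ∉ ψ.fv) :
    Simulation (insert (.eq a (.s (.var x))) (antSet S₀)) (sub2 y z b c)
      ⟨insert (.eq a (.s (.var x))) (insert (.eq b (.var y)) (insert (.eq c (.var z))
        (insert (.add2 (.var x) (.s (.var y)) (.var z)) Γ))), Δ⟩ S₀ := by
  obtain ⟨ha, hb, hc⟩ := Fm.add2.inj (Fm.subst_sub2_of_notMem (b := b) (c := c)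
    (hyz' _ (Finset.mem_insert_self _ _)).1 (hyz' _ (Finset.mem_insert_self _ _)).2)
  have hx : (Tm.var x).subst (sub2 y z b c) = .var x := by simp [Tm.subst, sub2, hxy, hxz]
  have hy : (Tm.var y).subst (sub2 y z b c) = b := by simp [Tm.subst, sub2]
  have hz : (Tm.var z).subst (sub2 y z b c) = c := by simp [Tm.subst, sub2, hyz.symm]
  have hax : Fm.eq a (.s (.var x)) ∈ insert (.eq a (.s (.var x))) (antSet S₀) :=
    Set.mem_insert _ _
  refine ((((simulation_of_subset (Finset.subset_insert _ _) subset_rfl (Set.subset_insert _ _)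
    fun ψ hψ => Fm.subst_sub2_of_notMem (hyz' ψ (Finset.mem_insert_of_mem hψ)).1
      (hyz' ψ (Finset.mem_insert_of_mem hψ)).2).insert_add2 (Finset.mem_insert_self _ _)
    ?_ ?_ ?_).insert_eq ?_).insert_eq ?_).insert_eq ?_
  · rw [hx]
    exact ⟨1, 0, (EqvTm.base hax).symm⟩
  · rw [Tm.subst, hy]
    exact ⟨0, 1, .refl _⟩
  · rw [hz]
  · rw [hc, hz]
  · rw [hb, hy]
  · rw [ha, Tm.subst, hx]
    exact .base hax

lemma separated_insert_c_eq_b (h : Separated (antSet S₀) (Aset S₀) (BCset S₀)) :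
    Separated (insert (.eq c b) (antSet S₀)) (Aset S₀) (BCset S₀) :=
  (h.symm.insert_eq (h.symm.singleton (.inr (.inl ⟨a, b, Finset.mem_insert_self _ _⟩)))
    (h.symm.singleton (.inl ⟨a, c, Finset.mem_insert_self _ _⟩))).symm

lemma goodSeq_caseAdd2_left (hy : ∀ ψ ∈ insert (Fm.add2 a b c) (Γ ∪ Δ), y ∉ ψ.fv)
    (hS : GoodSeq S₀) :
    GoodSeq ⟨insert (.eq a .zero) (insert (.eq b (.var y)) (insert (.eq c (.var y)) Γ)), Δ⟩ := by
  refine ⟨?_, hS.suc, ?_⟩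
  · intro φ hφ
    simp only [Finset.mem_insert] at hφ
    rcases hφ with rfl | rfl | rfl | hφ
    iterate 3 trivial
    exact hS.ant φ (Finset.mem_insert_of_mem hφ)
  · have h₁ := separated_insert_c_eq_b hS.sep
    exact (simulation_caseAdd2_left hy).separated (h₁.insert_eq
      (h₁.singleton (.inl ⟨b, c, Finset.mem_insert_self _ _⟩)) (h₁.singleton (.inr (.inr rfl))))

lemma indexSequent_caseAdd2_left (hy : ∀ ψ ∈ insert (Fm.add2 a b c) (Γ ∪ Δ), y ∉ ψ.fv)
    (hS : GoodSeq S₀) (hidx : IndexSequent S₀) (hbot : IndexBot S₀ b) :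
    IndexSequent
      ⟨insert (.eq a .zero) (insert (.eq b (.var y)) (insert (.eq c (.var y)) Γ)), Δ⟩ := by
  rw [indexBot_iff] at hbot
  obtain ⟨hsep, hrig⟩ := (indexSequent_iff _).mp hidx
  have hc : Separated (antSet S₀) (B1 S₀) {c} :=
    hsep.mono subset_rfl (Set.singleton_subset_iff.mpr (.inl ⟨a, b, Finset.mem_insert_self _ _⟩))
  have hA := separated_insert_c_eq_b hS.sep
  have ha := hA.singleton (.inl ⟨b, c, Finset.mem_insert_self _ _⟩)
  have h0 := hA.singleton (.inr (.inr rfl))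
  have hsep₁ := (hsep.symm.insert_eq hc.symm hbot).symm
  have hrig₁ := hrig.insert_eq hc hbot.symm
  exact (simulation_caseAdd2_left hy).indexSequent
    (hsep₁.insert_eq (ha.mono subset_rfl (Cset_subset_BCset _))
      (h0.mono subset_rfl (Cset_subset_BCset _)))
    (hrig₁.insert_eq (ha.mono subset_rfl (B1_subset_BCset _)).symm
      (h0.mono subset_rfl (B1_subset_BCset _)).symm)

lemma separated_s_var_of_caseAdd2_fresh (hx : ∀ ψ ∈ insert (Fm.add2 a b c) (Γ ∪ Δ), x ∉ ψ.fv) :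
    Separated (antSet S₀) {.s (.var x)} (BCset S₀) := by
  rw [← Finset.insert_union] at hx
  refine .s_var_of_fresh (fun t u h => ?_) fun u => notMem_fv_of_mem_BCset hx
  simpa [Fm.fv, not_or] using hx _ (Finset.mem_union_left _ h)

lemma goodSeq_caseAdd2_right (hxy : x ≠ y) (hxz : x ≠ z) (hyz : y ≠ z)
    (hfr : ∀ ψ ∈ insert (Fm.add2 a b c) (Γ ∪ Δ), x ∉ ψ.fv ∧ y ∉ ψ.fv ∧ z ∉ ψ.fv)
    (hS : GoodSeq S₀) :
    GoodSeq ⟨insert (.eq a (.s (.var x))) (insert (.eq b (.var y)) (insert (.eq c (.var z))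
      (insert (.add2 (.var x) (.s (.var y)) (.var z)) Γ))), Δ⟩ := by
  refine ⟨?_, hS.suc, ?_⟩
  · intro φ hφ
    simp only [Finset.mem_insert] at hφ
    rcases hφ with rfl | rfl | rfl | rfl | hφ
    iterate 4 trivial
    exact hS.ant φ (Finset.mem_insert_of_mem hφ)
  · exact (simulation_caseAdd2_right hxy hxz hyz fun ψ h => (hfr ψ h).2).separated
      (hS.sep.insert_eq (hS.sep.singleton (.inl ⟨b, c, Finset.mem_insert_self _ _⟩))
        (separated_s_var_of_caseAdd2_fresh fun ψ h => (hfr ψ h).1))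

lemma indexSequent_caseAdd2_right (hxy : x ≠ y) (hxz : x ≠ z) (hyz : y ≠ z)
    (hfr : ∀ ψ ∈ insert (Fm.add2 a b c) (Γ ∪ Δ), x ∉ ψ.fv ∧ y ∉ ψ.fv ∧ z ∉ ψ.fv)
    (hS : GoodSeq S₀) (hidx : IndexSequent S₀) :
    IndexSequent ⟨insert (.eq a (.s (.var x))) (insert (.eq b (.var y)) (insert (.eq c (.var z))
      (insert (.add2 (.var x) (.s (.var y)) (.var z)) Γ))), Δ⟩ := by
  obtain ⟨hsep, hrig⟩ := (indexSequent_iff _).mp hidx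
  have ha := hS.sep.singleton (.inl ⟨b, c, Finset.mem_insert_self _ _⟩)
  have hx := separated_s_var_of_caseAdd2_fresh fun ψ h => (hfr ψ h).1
  exact (simulation_caseAdd2_right hxy hxz hyz fun ψ h => (hfr ψ h).2).indexSequent
    (hsep.insert_eq (ha.mono subset_rfl (Cset_subset_BCset _))
      (hx.mono subset_rfl (Cset_subset_BCset _)))
    (hrig.insert_eq (ha.mono subset_rfl (B1_subset_BCset _)).symm
      (hx.mono subset_rfl (B1_subset_BCset _)).symm)

end CaseAdd2

theorem GoodSeq.premise {r : Rule} {S S' : Seq} {prems : List Seq} (hInf : Inf r S prems)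
    (hS : GoodSeq S) (hr : r.NotCutNorEqL) (hS' : S' ∈ prems) : GoodSeq S' := by
  cases hInf with
  | weak hΓ hΔ =>
    obtain rfl := List.mem_singleton.mp hS'
    exact ⟨fun φ h => hS.ant φ (hΓ h), fun φ h => hS.suc φ (hΔ h),
      (simulation_weak hΓ hΔ).separated hS.sep⟩
  | subst =>
    obtain rfl := List.mem_singleton.mp hS'
    exact ⟨fun φ h => by simpa using hS.ant _ (Finset.mem_image_of_mem _ h),
      fun φ h => by simpa using hS.suc _ (Finset.mem_image_of_mem _ h),
      (simulation_subst _).separated hS.sep⟩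
  | eqLa =>
    obtain rfl := List.mem_singleton.mp hS'
    refine ⟨fun φ h => ?_, fun φ h => ?_, simulation_eqLa.separated hS.sep⟩
    · rcases Finset.mem_insert.mp h with rfl | h
      · trivial
      obtain ⟨ψ, hψ, rfl⟩ := Finset.mem_image.mp h
      simpa using hS.ant _ (Finset.mem_insert_of_mem (Finset.mem_image_of_mem _ hψ))
    · obtain ⟨ψ, hψ, rfl⟩ := Finset.mem_image.mp h
      simpa using hS.suc _ (Finset.mem_image_of_mem _ hψ)
  | add1R2 =>
    obtain rfl := List.mem_singleton.mp hS'
    refine ⟨hS.ant, fun φ h => ?_, simulation_add1R2.separated hS.sep⟩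
    rcases Finset.mem_insert.mp h with rfl | h
    exacts [trivial, hS.suc φ (Finset.mem_insert_of_mem h)]
  | caseAdd2 hxy hxz hyz hfr =>
    simp only [List.mem_cons, List.not_mem_nil, or_false] at hS'
    rcases hS' with rfl | rfl
    · exact goodSeq_caseAdd2_left (fun ψ h => (hfr ψ h).2.1) hS
    · exact goodSeq_caseAdd2_right hxy hxz hyz hfr hS
  | ax | eqR | add1R1 | add2R1 => simp at hS'
  | cut | eqL => exact hr.elim
  | negL | andL | orL | impL | allL | exL | caseAdd1 =>
    exact (hS.ant _ (Finset.mem_insert_self _ _)).elim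
  | negR | andR | orR | impR | allR | exR | add2R2 =>
    exact (hS.suc _ (Finset.mem_insert_self _ _)).elim

theorem IndexSequent.premise {r : Rule} {S : Seq} {prems : List Seq} (hInf : Inf r S prems)
    (hS : GoodSeq S) (hidx : IndexSequent S) (hr : r.NotCutNorEqL) {n : ℕ}
    (hn : n < prems.length)
    (hsw : n = 0 → ∀ a b c x y z, r = .caseAdd2 a b c x y z → IndexBot S b) :
    IndexSequent (prems.get ⟨n, hn⟩) := by
  cases hInf with
  | weak hΓ hΔ =>
    obtain rfl : n = 0 := by simpa using hn
    exact (simulation_weak hΓ hΔ).indexSequent hidx.1 hidx.2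
  | subst =>
    obtain rfl : n = 0 := by simpa using hn
    exact (simulation_subst _).indexSequent hidx.1 hidx.2
  | eqLa =>
    obtain rfl : n = 0 := by simpa using hn
    exact simulation_eqLa.indexSequent hidx.1 hidx.2
  | add1R2 =>
    obtain rfl : n = 0 := by simpa using hn
    exact simulation_add1R2.indexSequent hidx.1 hidx.2
  | caseAdd2 hxy hxz hyz hfr =>
    rcases n with _ | _ | n
    · exact indexSequent_caseAdd2_left (fun ψ h => (hfr ψ h).2.1) hS hidx
        (hsw rfl _ _ _ _ _ _ rfl)
    · exact indexSequent_caseAdd2_right hxy hxz hyz hfr hS hidx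
    · simp at hn
  | ax | eqR | add1R1 | add2R1 => simp at hn
  | cut | eqL => exact hr.elim
  | negL | andL | orL | impL | allL | exL | caseAdd1 =>
    exact (hS.ant _ (Finset.mem_insert_self _ _)).elim
  | negR | andR | orR | impR | allR | exR | add2R2 =>
    exact (hS.suc _ (Finset.mem_insert_self _ _)).elim

lemma goodSeq_goalSeq : GoodSeq goalSeq := by
  refine ⟨by simp [goalSeq, Fm.IsEqOrAdd2], by simp [goalSeq, Fm.IsAdd1], ?_⟩
  have hΓ : ∀ x t u, Fm.eq t u ∈ antSet goalSeq → x ∉ t.fv ∧ x ∉ u.fv := by simp [goalSeq]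
  have hA : Aset goalSeq ⊆ {.var 0, .zero} := by
    rintro t (⟨b, c, h⟩ | ⟨b, c, h⟩ | rfl) <;> simp_all [goalSeq]
  have hBC : BCset goalSeq ⊆ {.var 1, .var 2} := by
    rintro t (⟨a, c, h⟩ | ⟨a, b, h⟩ | ⟨a, c, h⟩ | ⟨a, b, h⟩) <;> simp_all [goalSeq]
  intro t ht u hu
  rcases hA ht with rfl | rfl <;> rcases hBC hu with rfl | rfl
  iterate 2 exact DepTm.not_of_fresh (hΓ 0) (by simp [Tm.fv]) (by simp [Tm.fv])
  · exact fun h => DepTm.not_of_fresh (hΓ 1) (by simp [Tm.fv]) (by simp [Tm.fv]) h.symm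
  · exact fun h => DepTm.not_of_fresh (hΓ 2) (by simp [Tm.fv]) (by simp [Tm.fv]) h.symm

lemma DTree.not_budAt_of_prefix (D : DTree) {σ τ : List ℕ} (h : D.label σ ≠ none)
    (hpre : τ <+: σ) (hne : τ ≠ σ) : ¬ budAt D.label τ := by
  rintro ⟨S, hS⟩
  obtain ⟨_ | ⟨i, ρ⟩, rfl⟩ := hpre
  · exact hne (List.append_nil τ).symm
  rcases D.wf τ S _ hS with ⟨-, hleaf⟩ | ⟨hr, -⟩
  · exact D.prefix_closed (τ ++ [i]) ρ (by simpa using h) (hleaf i)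
  · exact hr rfl

lemma PreProof.CycleNormal.companion_length_lt {P : PreProof} (hcn : P.CycleNormal)
    {σ : List ℕ} {S : Seq} (h : P.D.label σ = some (S, .bud)) :
    (P.C σ).length < σ.length := by
  obtain ⟨r, hr, hne⟩ := P.comp σ S h
  have hpre := hcn σ S h
  refine lt_of_le_of_ne hpre.length_le fun hlen => hne ?_
  rw [hpre.eq_of_length hlen, h] at hr
  cases hr
  rfl

namespace IsUnfolding

variable {P : PreProof} {T : Lbl}

/- Cycle-normality makes the descent from a bud to its companion shorten the node. -/
lemma exists_inner_shift (hcn : P.CycleNormal) (hT : IsUnfolding P T) {σ : List ℕ}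
    (hσ : T σ ≠ none) : ∃ δ, P.D.label δ ≠ none ∧ ¬ budAt P.D.label δ ∧
      ∀ τ, T (σ ++ τ) = T (δ ++ τ) := by
  induction hlen : σ.length using Nat.strong_induction_on generalizing σ with
  | _ N ih =>
  by_cases hb : ∃ σ₁, σ₁ <+: σ ∧ budAt P.D.label σ₁
  · obtain ⟨σ₁, ⟨ρ, rfl⟩, hbud⟩ := hb
    have shift : ∀ τ, T (σ₁ ++ ρ ++ τ) = T (P.C σ₁ ++ ρ ++ τ) := fun τ => by
      simpa using hT.2.1 σ₁ (ρ ++ τ) hbud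
    have hσ' : T (P.C σ₁ ++ ρ) ≠ none := by simpa using (shift []).symm.trans_ne (by simpa using hσ)
    obtain ⟨S, hS⟩ := hbud
    have hlt := hcn.companion_length_lt hS
    obtain ⟨δ, hδ, hδb, hδT⟩ := ih (P.C σ₁ ++ ρ).length
      (by simp only [List.length_append] at hlen ⊢; omega) hσ' rfl
    exact ⟨δ, hδ, hδb, fun τ => (shift τ).trans (hδT τ)⟩
  · push Not at hb
    have hD : P.D.label σ ≠ none := fun hD => hσ (hT.2.2 σ hD hb)
    exact ⟨σ, hD, hb σ List.prefix_rfl, fun _ => rfl⟩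

lemma exists_of_label (hT : IsUnfolding P T) {δ : List ℕ} {S : Seq} {r : Rule}
    (h : P.D.label δ = some (S, r)) : ∃ r', T δ = some (S, r') := by
  by_cases hr : r = .bud
  · subst hr
    obtain ⟨r', hC, hr'⟩ := P.comp δ S h
    have hCb : ¬ budAt P.D.label (P.C δ) := by
      rintro ⟨S', hS'⟩
      rw [hC] at hS'
      cases hS'
      exact hr' rfl
    refine ⟨r', ?_⟩
    rw [← hC, ← hT.1 _ (by simp [hC]) hCb]
    simpa using hT.2.1 δ [] ⟨S, h⟩
  · refine ⟨r, ?_⟩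
    rw [← h]
    refine hT.1 δ (by simp [h]) ?_
    rintro ⟨S', hS'⟩
    rw [h] at hS'
    cases hS'
    exact hr rfl

lemma child (hT : IsUnfolding P T) {δ : List ℕ} {S : Seq} {r : Rule}
    (hδ : P.D.label δ = some (S, r)) (hr : r ≠ .bud) {n : ℕ} (hc : T (δ ++ [n]) ≠ none) :
    ∃ prems, Inf r S prems ∧
      ∃ (hn : n < prems.length) (r' : Rule), T (δ ++ [n]) = some (prems.get ⟨n, hn⟩, r') := by
  rcases P.D.wf δ S r hδ with ⟨hb, -⟩ | ⟨-, prems, hInf, hchildren⟩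
  · exact absurd hb hr
  refine ⟨prems, hInf, ?_⟩
  by_cases hn : n < prems.length
  · obtain ⟨r', hr'⟩ := hchildren.1 ⟨n, hn⟩
    exact ⟨hn, hT.exists_of_label hr'⟩
  · have hnone := hchildren.2 n (not_lt.mp hn)
    refine absurd (hT.2.2 _ hnone fun σ₁ hσ₁ hb => ?_) hc
    rcases List.prefix_concat_iff.mp hσ₁ with rfl | hσ₁
    · obtain ⟨S', hS'⟩ := hb
      simp [hnone] at hS'
    by_cases hσδ : σ₁ = δ
    · subst hσδ
      obtain ⟨S', hS'⟩ := hb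
      rw [hδ] at hS'
      cases hS'
      exact hr rfl
    · exact P.D.not_budAt_of_prefix (by simp [hδ]) hσ₁ hσδ hb

end IsUnfolding

namespace IsCNProofOfGoal

variable {P : PreProof}

lemma notCutNorEqL (hP : IsCNProofOfGoal P) {σ : List ℕ} {S : Seq} {r : Rule}
    (h : P.D.label σ = some (S, r)) : r.NotCutNorEqL := by
  cases r
  case cut φ => exact hP.2.1 ⟨σ, S, _, h, φ, rfl⟩
  case eqL v₁ v₂ t u => exact hP.2.2.1 ⟨σ, S, _, h, v₁, v₂, t, u, rfl⟩
  all_goals trivial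

lemma goodSeq (hP : IsCNProofOfGoal P) {σ : List ℕ} {S : Seq} {r : Rule}
    (h : P.D.label σ = some (S, r)) : GoodSeq S := by
  induction σ using List.reverseRecOn generalizing S r with
  | nil =>
    obtain ⟨r₀, h₀⟩ := hP.2.2.2.2
    rw [h₀] at h
    cases h
    exact goodSeq_goalSeq
  | append_singleton τ n ih =>
    obtain ⟨⟨S₀, r₀⟩, h₀⟩ := Option.ne_none_iff_exists'.mp
      (P.D.prefix_closed τ [n] (by simp [h]))
    rcases P.D.wf τ S₀ r₀ h₀ with ⟨-, hleaf⟩ | ⟨-, prems, hInf, hchildren⟩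
    · simp [hleaf n] at h
    by_cases hn : n < prems.length
    · obtain ⟨r', hr'⟩ := hchildren.1 ⟨n, hn⟩
      rw [h] at hr'
      cases hr'
      exact (ih h₀).premise hInf (hP.notCutNorEqL h₀) (List.get_mem prems ⟨n, hn⟩)
    · simp [hchildren.2 n (not_lt.mp hn)] at h

lemma premise_of_child (hP : IsCNProofOfGoal P) {T : Lbl} (hT : IsUnfolding P T)
    {σ : List ℕ} {S : Seq} {r : Rule} (hσ : T σ = some (S, r)) {n : ℕ}
    (hc : T (σ ++ [n]) ≠ none) :
    GoodSeq S ∧ r.NotCutNorEqL ∧ ∃ prems, Inf r S prems ∧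
      ∃ (hn : n < prems.length) (r' : Rule), T (σ ++ [n]) = some (prems.get ⟨n, hn⟩, r') := by
  obtain ⟨δ, hδ, hδb, hshift⟩ := hT.exists_inner_shift hP.2.2.2.1 (σ := σ) (by simp [hσ])
  have hδS : P.D.label δ = some (S, r) := by
    rw [← hT.1 δ hδ hδb, ← hσ]
    simpa using (hshift []).symm
  have hr : r ≠ .bud := by
    rintro rfl
    exact hδb ⟨S, hδS⟩
  rw [hshift] at hc ⊢
  exact ⟨hP.goodSeq hδS, hP.notCutNorEqL hδS, hT.child hδS hr hc⟩

end IsCNProofOfGoal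

lemma SwitchingPoint.indexBot {f : Lbl} {σ : List ℕ} {S : Seq} {a b c : Tm} {x y z : ℕ}
    (hσ : f σ = some (S, .caseAdd2 a b c x y z)) (h : SwitchingPoint f σ) : IndexBot S b := by
  obtain ⟨S', a', b', c', x', y', z', hσ', hbot⟩ := h
  rw [hσ] at hσ'
  cases hσ'
  exact hbot

/-- Every sequent occurring in an index path of the
    tree-unfolding of a cut-free cycle-normal `CLKID^ω_a` proof of
    `Add2(x,y,z) ⊢ Add1(x,y,z)` is an index sequent. -/
theorem index_path_index_sequents (P : PreProof) (hP : IsCNProofOfGoal P)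
    (T : Lbl) (hT : IsUnfolding P T) :
    ∀ (p : ℕ → List ℕ) (N : ℕ), IsIndexPathUpTo T p N →
      ∀ i, i ≤ N → IndexSequentAt T (p i) := by
  intro p N ⟨hdom, hstep, hstart, hswitch⟩ i hi
  induction i with
  | zero => exact hstart
  | succ i ih =>
    obtain ⟨S, r, hS, hidx⟩ := ih (by omega)
    obtain ⟨n, hn⟩ := hstep i (by omega)
    obtain ⟨hgood, hr, prems, hInf, hlt, r', hchild⟩ :=
      hP.premise_of_child hT hS (hn ▸ hdom (i + 1) hi)
    refine ⟨_, r', hn ▸ hchild, hidx.premise hInf hgood hr hlt ?_⟩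
    rintro rfl a b c x y z rfl
    exact SwitchingPoint.indexBot hS (hswitch i (by omega) ⟨S, a, b, c, x, y, z, hS⟩ hn)

end CLKID
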